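/- arXiv:math/0703404 — 2 statements merged into one kernel-verified Lean document; each statement's English description precedes it below -/
import Mathlib

section
/- For all 1 ≤ k, ℓ ≤ n, one has D_k(h_ℓ) = δ_{k,ℓ} in ℚ[e_1, …, e_n] (i.e., D_ℓ(h_ℓ) = 1 and D_k(h_ℓ) = 0 for k ≠ ℓ). -/
/-!
`D_k` is a derivation with `D_k e_m = e_{m-k}`. Apply it to Newton's identity in the form
`∑_{i<m} (-1)^i e_i s_{m-i} = (-1)^(m+1) m e_m`: the terms in which `D_k` hits `e_i` reassemble
into `(-1)^k` times the same sum for `m - k`, and by strong induction `D_k s_j` vanishes for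
`j < m` except at `j = k`. Comparing both sides leaves `D_k s_m = (-1)^(m+1) m δ_{km}`, which is
`D_k h_ℓ = δ_{kℓ}` after rescaling.
-/

open MvPolynomial Finset

noncomputable def ee (K : Type) [CommRing K] (n : ℕ) : ℕ → MvPolynomial (Fin n) K
  | 0 => 1
  | (m + 1) => if h : m + 1 ≤ n then MvPolynomial.X ⟨m, by omega⟩ else 0

noncomputable def DD (K : Type) [CommRing K] (n : ℕ) (i : Fin n) :
    MvPolynomial (Fin n) K →ₗ[K] MvPolynomial (Fin n) K :=
  ∑ j : Fin n, if i ≤ j then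
    (LinearMap.mulLeft K (ee K n (j.val - i.val))).comp (MvPolynomial.pderiv j).toLinearMap
  else 0

/-- Newton's recursion: `s_{ℓ} = (−1)^{ℓ−1} ℓ e_ℓ + ∑_{j=1}^{ℓ−1} (−1)^{j−1} e_j s_{ℓ−j}`. -/
noncomputable def ss (n : ℕ) : ℕ → MvPolynomial (Fin n) ℚ
  | 0 => 0
  | (ℓ + 1) =>
    ((-1 : ℚ) ^ ℓ * ((ℓ : ℚ) + 1)) • ee ℚ n (ℓ + 1) +
      ∑ j ∈ Finset.range ℓ, ((-1 : ℚ) ^ j) • (ee ℚ n (j + 1) * ss n (ℓ - j))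
decreasing_by omega

/-- `h_ℓ = (−1)^{ℓ−1} s_ℓ / ℓ`, with `ℓ = i + 1`. -/
noncomputable def hh (n : ℕ) (i : Fin n) : MvPolynomial (Fin n) ℚ :=
  ((-1 : ℚ) ^ (i : ℕ) / ((i : ℕ) + 1)) • ss n ((i : ℕ) + 1)

section
variable {K : Type} [CommRing K] {n : ℕ}

theorem ee_zero : ee K n 0 = 1 := rfl

theorem DD_apply (i : Fin n) (p : MvPolynomial (Fin n) K) :
    DD K n i p = ∑ j : Fin n, if i ≤ j then ee K n (j - i) * pderiv j p else 0 := by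
  rw [DD, LinearMap.sum_apply]
  refine sum_congr rfl fun j _ => ?_
  split_ifs <;> rfl

theorem DD_mul (i : Fin n) (p q : MvPolynomial (Fin n) K) :
    DD K n i (p * q) = DD K n i p * q + p * DD K n i q := by
  simp only [DD_apply, pderiv_mul, sum_mul, mul_sum, ← sum_add_distrib]
  refine sum_congr rfl fun j _ => ?_
  split_ifs <;> ring

theorem DD_one (i : Fin n) : DD K n i 1 = 0 := by
  simp [DD_apply]

theorem DD_X (i j : Fin n) : DD K n i (X j) = if i ≤ j then ee K n (j - i) else 0 := by
  rw [DD_apply, Fintype.sum_eq_single j fun b hb => by simp [pderiv_X_of_ne hb.symm]]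
  simp

theorem DD_ee (i : Fin n) {m : ℕ} (hm : m ≤ n) :
    DD K n i (ee K n m) = if (i : ℕ) + 1 ≤ m then ee K n (m - (i + 1)) else 0 := by
  cases m with
  | zero => rw [ee_zero, DD_one, if_neg (by omega)]
  | succ m =>
    simp only [ee, dif_pos hm, DD_X, Fin.le_def, Nat.add_le_add_iff_right, Nat.add_sub_add_right]

end

noncomputable def newtonSum (n m : ℕ) : MvPolynomial (Fin n) ℚ :=
  ∑ i ∈ range m, (-1 : ℚ) ^ i • (ee ℚ n i * ss n (m - i))

section
variable {n : ℕ}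

theorem newtonSum_eq (m : ℕ) : newtonSum n m = ((-1 : ℚ) ^ (m + 1) * m) • ee ℚ n m := by
  cases m with
  | zero => simp [newtonSum]
  | succ m =>
    rw [newtonSum, sum_range_succ', pow_zero, one_smul, Nat.sub_zero, ss]
    simp only [ee_zero, one_mul, Nat.add_sub_add_right, pow_succ, mul_neg_one, neg_smul,
      sum_neg_distrib, neg_neg, Nat.cast_succ]
    abel

variable (k : Fin n)

theorem sum_DD_ee_mul_ss {m : ℕ} (hm : m ≤ n + 1) :
    ∑ i ∈ range m, (-1 : ℚ) ^ i • (DD ℚ n k (ee ℚ n i) * ss n (m - i)) =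
      (-1 : ℚ) ^ ((k : ℕ) + 1) • newtonSum n (m - (k + 1)) := by
  have hDD : ∀ i ∈ range m,
      DD ℚ n k (ee ℚ n i) = if (k : ℕ) + 1 ≤ i then ee ℚ n (i - (k + 1)) else 0 :=
    fun i hi => DD_ee k (by rw [mem_range] at hi; omega)
  rw [sum_congr rfl fun i hi => by rw [hDD i hi]]
  rcases le_or_gt m (k + 1) with h | h
  · rw [Nat.sub_eq_zero_of_le h, newtonSum, sum_range_zero, smul_zero]
    exact sum_eq_zero fun i hi => by simp [show ¬ (k : ℕ) + 1 ≤ i by rw [mem_range] at hi; omega]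
  · obtain ⟨t, rfl⟩ := Nat.exists_eq_add_of_le h.le
    rw [sum_range_add,
      sum_eq_zero fun i hi => by simp [show ¬ (k : ℕ) + 1 ≤ i by rw [mem_range] at hi; omega],
      zero_add, Nat.add_sub_cancel_left, newtonSum, smul_sum]
    refine sum_congr rfl fun i _ => ?_
    rw [if_pos (Nat.le_add_right _ _), Nat.add_sub_cancel_left, Nat.add_sub_add_left, pow_add,
      mul_smul]

theorem DD_newtonSum {m : ℕ} (hm : m ≤ n + 1) :
    DD ℚ n k (newtonSum n m) = (-1 : ℚ) ^ ((k : ℕ) + 1) • newtonSum n (m - (k + 1)) +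
      ∑ i ∈ range m, (-1 : ℚ) ^ i • (ee ℚ n i * DD ℚ n k (ss n (m - i))) := by
  simp only [newtonSum, map_sum, map_smul, DD_mul, smul_add, sum_add_distrib]
  rw [← newtonSum, sum_DD_ee_mul_ss k hm]

theorem DD_ss {m : ℕ} (hm : m ≤ n) :
    DD ℚ n k (ss n m) = if m = k + 1 then ((-1 : ℚ) ^ (m + 1) * m) • 1 else 0 := by
  induction m using Nat.strong_induction_on with
  | _ m ih =>
  cases m with
  | zero => simp [ss]
  | succ r =>
    -- `D_k` of Newton's identity at `r + 1`, with the term `D_k s_{r+1}` (from `i = 0`) split off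
    have key := congrArg (DD ℚ n k) (newtonSum_eq (n := n) (r + 1))
    rw [DD_newtonSum k (by omega), map_smul, DD_ee k hm, sum_range_succ', pow_zero, one_smul,
      ee_zero, one_mul, Nat.sub_zero] at key
    simp only [Nat.add_sub_add_right] at key
    rcases le_or_gt r k with h | h
    · have hrest : ∀ i ∈ range r,
          (-1 : ℚ) ^ (i + 1) • (ee ℚ n (i + 1) * DD ℚ n k (ss n (r - i))) = 0 := by
        intro i hi
        rw [mem_range] at hi
        rw [ih (r - i) (by omega) (by omega), if_neg (by omega), mul_zero, smul_zero]
      rw [sum_eq_zero hrest, Nat.sub_eq_zero_of_le (by omega), newtonSum_eq] at key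
      rcases h.eq_or_lt with rfl | h
      · simpa [ee_zero] using key
      · simpa [show r ≠ k by omega, show ¬ (k : ℕ) + 1 ≤ r + 1 by omega] using key
    · obtain ⟨t, rfl⟩ := Nat.exists_eq_add_of_lt h
      have hrest : ∑ i ∈ range (k + t + 1),
          (-1 : ℚ) ^ (i + 1) • (ee ℚ n (i + 1) * DD ℚ n k (ss n (k + t + 1 - i))) =
          ((-1 : ℚ) ^ (t + 1) * ((-1 : ℚ) ^ ((k : ℕ) + 2) * ((k : ℚ) + 1))) • ee ℚ n (t + 1) := by
        rw [sum_eq_single t]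
        · rw [ih _ (by omega) (by omega), if_pos (by omega), show k + t + 1 - t = k + 1 by omega,
            mul_smul_comm, mul_one]
          module
        · intro i hi hne
          rw [mem_range] at hi
          rw [ih (k + t + 1 - i) (by omega) (by omega), if_neg (by omega), mul_zero, smul_zero]
        · simp
      rw [hrest, show k + t + 1 - k = t + 1 by omega, newtonSum_eq, if_pos (by omega)] at key
      rw [if_neg (by omega)]
      push_cast at key
      linear_combination (norm := module) key

end

theorem stmt2_general (n : ℕ) (k l : Fin n) :
    DD ℚ n k (hh n l) = if k = l then 1 else 0 := by
  rw [hh, map_smul, DD_ss k (m := l + 1) l.isLt]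
  by_cases h : k = l
  · subst h
    rw [if_pos rfl, if_pos rfl, smul_smul]
    convert one_smul ℚ (1 : MvPolynomial (Fin n) ℚ)
    rw [← mul_assoc, div_mul_eq_mul_div, ← pow_add, Even.neg_one_pow ⟨k + 1, by ring⟩]
    push_cast
    exact one_div_mul_cancel (by positivity)
  · rw [if_neg (by omega), if_neg h, smul_zero]

theorem stmt2 (n : ℕ) (hn : 1 ≤ n) (k l : Fin n) :
    DD ℚ n k (hh n l) = if k = l then 1 else 0 :=
  stmt2_general n k l
end

section
/- For all subsets I, J ⊆ U (not necessarily disjoint) and every 1 ≤ i ≤ n: x_i ∧ (α_I ∘ α_J) = (x_i ∧ α_I) ∘ α_J + (−1)^{|I|} α_I ∘ (x_i ∧ α_J) in Λ, where ∧ is the exterior (Pontrjagin) product and ∘ is the intersection product. -/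
open Finset

/-- The model of the exterior algebra `Λ_ℤ(x_1,…,x_n)`: a function `a : Lam n` represents
`∑_I (a I) x_I`. -/
abbrev Lam (n : ℕ) := Finset (Fin n) → ℤ

/-- The Koszul sign defined by `x_{I∪K} = sgn(I,K) x_I ∧ x_K` for disjoint `I, K`. -/
def sgn (n : ℕ) (I K : Finset (Fin n)) : ℤ :=
  (-1) ^ (((I ×ˢ K).filter (fun p => p.2 < p.1)).card)

/-- The basis element `x_I`. -/
def basL (n : ℕ) (I : Finset (Fin n)) : Lam n :=
  fun S => if S = I then 1 else 0

/-- The exterior (wedge, Pontrjagin) product on `Lam n`. -/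
def wl {n : ℕ} (a b : Lam n) : Lam n :=
  fun S => ∑ I ∈ S.powerset, sgn n I (S \ I) * a I * b (S \ I)

/-- The sign `(−1)^{|I|(|I|−1)/2} sgn(I, I^c)`. -/
def eps (n : ℕ) (I : Finset (Fin n)) : ℤ :=
  (-1) ^ (I.card * (I.card - 1) / 2) * sgn n I Iᶜ

/-- `α_I = (−1)^{|I|(|I|−1)/2} sgn(I, I^c) x_{I^c}`. -/
def alphaL (n : ℕ) (I : Finset (Fin n)) : Lam n :=
  fun S => if S = Iᶜ then eps n I else 0

/-- The Kronecker pairing `⟨y_I, x_J⟩ = (−1)^{|I|(|I|−1)/2} δ_{I,J}`, extended ℤ-bilinearly. -/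
def pairL (n : ℕ) (y x : Lam n) : ℤ :=
  ∑ I : Finset (Fin n), ((-1 : ℤ) ^ (I.card * (I.card - 1) / 2)) * y I * x I

/-- The intersection product: the ℤ-bilinear extension of
`α_I ∘ α_J = sgn(I,J) α_{I∪J}` for disjoint `I, J`, and `0` otherwise
(using the coordinates of `a` in the basis `{α_I}`, namely `c_I = eps(I) · a(I^c)`). -/
def interL (n : ℕ) (a b : Lam n) : Lam n :=
  fun S => ∑ I : Finset (Fin n), ∑ K : Finset (Fin n),
    if Disjoint I K then
      (eps n I * a Iᶜ) * (eps n K * b Kᶜ) * sgn n I K * alphaL n (I ∪ K) S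
    else 0

lemma tri_succ (m : ℕ) : (m+1)*((m+1)-1)/2 = m*(m-1)/2 + m := by
  rw [Nat.add_sub_cancel]
  cases m with
  | zero => rfl
  | succ k =>
    rw [Nat.succ_sub_one, show (k+1+1)*(k+1) = (k+1)*k + (k+1)*2 from by ring,
      Nat.add_mul_div_right _ _ (by norm_num : (0:ℕ) < 2)]

lemma tri_add (a b : ℕ) : (a+b)*((a+b)-1)/2 = a*(a-1)/2 + b*(b-1)/2 + a*b := by
  induction b with
  | zero => simp
  | succ k ih =>
    rw [show a + (k+1) = (a+k)+1 from rfl, tri_succ (a+k), ih, tri_succ k,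
      show a*(k+1) = a*k + a from by ring]
    generalize a*(a-1)/2 = A
    generalize k*(k-1)/2 = B
    generalize a*k = C
    omega

lemma sgn_sq (n : ℕ) (I K : Finset (Fin n)) : sgn n I K * sgn n I K = 1 := by
  unfold sgn; rw [← pow_add]; exact Even.neg_one_pow ⟨_, rfl⟩

lemma sgn_union_left (n : ℕ) {I K : Finset (Fin n)} (L : Finset (Fin n)) (h : Disjoint I K) :
    sgn n (I ∪ K) L = sgn n I L * sgn n K L := by
  unfold sgn
  rw [← pow_add]
  congr 1
  have hd : Disjoint (I ×ˢ L) (K ×ˢ L) := by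
    rw [Finset.disjoint_left]
    intro p hp hq
    rw [Finset.mem_product] at hp hq
    exact Finset.disjoint_left.mp h hp.1 hq.1
  rw [Finset.union_product, Finset.filter_union,
    Finset.card_union_of_disjoint (Finset.disjoint_filter_filter hd)]

lemma sgn_union_right (n : ℕ) (I : Finset (Fin n)) {K L : Finset (Fin n)} (h : Disjoint K L) :
    sgn n I (K ∪ L) = sgn n I K * sgn n I L := by
  unfold sgn
  rw [← pow_add]
  congr 1
  have hd : Disjoint (I ×ˢ K) (I ×ˢ L) := by
    rw [Finset.disjoint_left]
    intro p hp hq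
    rw [Finset.mem_product] at hp hq
    exact Finset.disjoint_left.mp h hp.2 hq.2
  rw [Finset.product_union, Finset.filter_union,
    Finset.card_union_of_disjoint (Finset.disjoint_filter_filter hd)]

lemma sgn_mul_sgn (n : ℕ) {I K : Finset (Fin n)} (h : Disjoint I K) :
    sgn n I K * sgn n K I = (-1) ^ (I.card * K.card) := by
  unfold sgn
  rw [← pow_add]
  congr 1
  have himg : ((K ×ˢ I).filter fun p => p.2 < p.1)
      = ((I ×ˢ K).filter fun p => p.1 < p.2).image Prod.swap := by
    ext ⟨a, b⟩
    simp only [Finset.mem_filter, Finset.mem_product, Finset.mem_image, Prod.exists]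
    constructor
    · rintro ⟨⟨ha, hb⟩, hlt⟩
      exact ⟨b, a, ⟨⟨hb, ha⟩, hlt⟩, rfl⟩
    · rintro ⟨x, y, ⟨⟨hx, hy⟩, hlt⟩, heq⟩
      rw [Prod.ext_iff] at heq
      obtain ⟨h1, h2⟩ := heq
      simp only [Prod.fst_swap, Prod.snd_swap] at h1 h2
      subst h1; subst h2
      exact ⟨⟨hy, hx⟩, hlt⟩
  rw [himg, Finset.card_image_of_injective _ Prod.swap_injective]
  have hdisj2 : Disjoint ((I ×ˢ K).filter fun p => p.2 < p.1)
      ((I ×ˢ K).filter fun p => p.1 < p.2) := by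
    rw [Finset.disjoint_left]
    intro p hp hq
    simp only [Finset.mem_filter] at hp hq
    exact absurd hq.2 (not_lt.mpr hp.2.le)
  rw [← Finset.card_union_of_disjoint hdisj2, ← Finset.filter_or]
  have : ((I ×ˢ K).filter fun p => p.2 < p.1 ∨ p.1 < p.2) = I ×ˢ K := by
    apply Finset.filter_true_of_mem
    intro p hp
    rw [Finset.mem_product] at hp
    have hne : p.2 ≠ p.1 := fun he => Finset.disjoint_left.mp h hp.1 (he ▸ hp.2)
    exact lt_or_gt_of_ne hne
  rw [this, Finset.card_product]

lemma sgn_swap (n : ℕ) {I K : Finset (Fin n)} (h : Disjoint I K) :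
    sgn n I K = (-1) ^ (I.card * K.card) * sgn n K I := by
  calc sgn n I K = sgn n I K * (sgn n K I * sgn n K I) := by rw [sgn_sq, mul_one]
    _ = (sgn n I K * sgn n K I) * sgn n K I := by ring
    _ = _ := by rw [sgn_mul_sgn n h]

lemma eps_sq (n : ℕ) (I : Finset (Fin n)) : eps n I * eps n I = 1 := by
  unfold eps
  rw [mul_mul_mul_comm, sgn_sq, mul_one, ← pow_add]
  exact Even.neg_one_pow ⟨_, rfl⟩

lemma eps_pm (n : ℕ) (I : Finset (Fin n)) : eps n I = 1 ∨ eps n I = -1 :=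
  mul_self_eq_one_iff.mp (eps_sq n I)

lemma eps_union (n : ℕ) {I J : Finset (Fin n)} (h : Disjoint I J) :
    eps n (I ∪ J) = eps n I * eps n J := by
  unfold eps
  have hc : (I ∪ J).card = I.card + J.card := Finset.card_union_of_disjoint h
  have hIc : Iᶜ = J ∪ (I ∪ J)ᶜ := by
    ext x
    simp only [Finset.mem_compl, Finset.mem_union, not_or]
    constructor
    · intro hx
      by_cases hxJ : x ∈ J
      · exact Or.inl hxJ
      · exact Or.inr ⟨hx, hxJ⟩
    · rintro (hxJ | ⟨hx, _⟩)
      · exact Finset.disjoint_right.mp h hxJ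
      · exact hx
  have hJc : Jᶜ = I ∪ (I ∪ J)ᶜ := by
    ext x
    simp only [Finset.mem_compl, Finset.mem_union, not_or]
    constructor
    · intro hx
      by_cases hxI : x ∈ I
      · exact Or.inl hxI
      · exact Or.inr ⟨hxI, hx⟩
    · rintro (hxI | ⟨_, hx⟩)
      · exact Finset.disjoint_left.mp h hxI
      · exact hx
  have hdJ : Disjoint J (I ∪ J)ᶜ :=
    disjoint_compl_right.mono_left Finset.subset_union_right
  have hdI : Disjoint I (I ∪ J)ᶜ :=
    disjoint_compl_right.mono_left Finset.subset_union_left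
  rw [hc, tri_add, sgn_union_left n _ h]
  rw [show sgn n I Iᶜ = sgn n I J * sgn n I (I ∪ J)ᶜ from by
    rw [hIc]; exact sgn_union_right n I hdJ]
  rw [show sgn n J Jᶜ = sgn n J I * sgn n J (I ∪ J)ᶜ from by
    rw [hJc]; exact sgn_union_right n J hdI]
  have hs := sgn_mul_sgn n h
  rw [pow_add, pow_add]
  linear_combination (-((-1:ℤ)^(I.card*(I.card-1)/2) * (-1:ℤ)^(J.card*(J.card-1)/2)
    * sgn n I (I ∪ J)ᶜ * sgn n J (I ∪ J)ᶜ)) * hs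

lemma wl_single (n : ℕ) (i : Fin n) (b : Lam n) :
    wl (basL n {i}) b = fun S => if i ∈ S then sgn n {i} (S \ {i}) * b (S \ {i}) else 0 := by
  funext S
  unfold wl basL
  simp only [mul_ite, mul_one, mul_zero, ite_mul, zero_mul]
  rw [Finset.sum_ite_eq' S.powerset {i} (fun T => sgn n T (S \ T) * b (S \ T))]
  simp [Finset.singleton_subset_iff]

lemma interL_pt_pt (n : ℕ) (A B : Finset (Fin n)) (c d : ℤ) :
    interL n (fun S => if S = Aᶜ then c else 0) (fun S => if S = Bᶜ then d else 0)
      = fun S => if Disjoint A B ∧ S = (A ∪ B)ᶜ then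
          (eps n A * c) * (eps n B * d) * sgn n A B * eps n (A ∪ B) else 0 := by
  funext S
  unfold interL
  simp only [compl_inj_iff]
  rw [Finset.sum_eq_single A]
  · rw [Finset.sum_eq_single B]
    · simp only [if_pos rfl, alphaL]
      by_cases hD : Disjoint A B <;> by_cases hS : S = (A ∪ B)ᶜ <;> simp [hD, hS]
    · intro K _ hK; simp [hK]
    · simp
  · intro I' _ hI'; simp [hI']
  · simp

lemma wl_alpha (n : ℕ) (i : Fin n) (I : Finset (Fin n)) :
    wl (basL n {i}) (alphaL n I)
      = fun S => if i ∈ I ∧ S = (I.erase i)ᶜ then sgn n {i} Iᶜ * eps n I else 0 := by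
  funext S
  rw [wl_single]
  simp only [alphaL]
  by_cases hS : i ∈ S
  · simp only [hS, if_true]
    by_cases h2 : S \ {i} = Iᶜ
    · have hiI : i ∈ I := by
        have h3 : i ∉ S \ {i} := by simp
        rw [h2] at h3
        simpa using h3
      have hSeq : S = (I.erase i)ᶜ := by
        rw [Finset.compl_erase, ← h2, ← Finset.erase_eq]
        exact (Finset.insert_erase hS).symm
      rw [h2]
      simp [hiI, hSeq]
    · have hne : ¬(i ∈ I ∧ S = (I.erase i)ᶜ) := by
        rintro ⟨hiI, rfl⟩
        exact h2 (by rw [Finset.compl_erase, ← Finset.erase_eq,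
          Finset.erase_insert (by simp [hiI])])
      rw [Finset.compl_erase] at hne
      simp [h2, hne]
  · have hne : ¬(i ∈ I ∧ S = (I.erase i)ᶜ) := by
      rintro ⟨_, rfl⟩
      exact hS (by simp)
    rw [Finset.compl_erase] at hne
    simp [hS, hne]

lemma term1_eq (n : ℕ) (i : Fin n) (I J : Finset (Fin n)) :
    interL n (wl (basL n {i}) (alphaL n I)) (alphaL n J)
      = fun S => if i ∈ I ∧ Disjoint (I.erase i) J ∧ S = ((I.erase i) ∪ J)ᶜ then
          (eps n (I.erase i) * (sgn n {i} Iᶜ * eps n I)) * (eps n J * eps n J)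
            * sgn n (I.erase i) J * eps n ((I.erase i) ∪ J) else 0 := by
  rw [wl_alpha]
  by_cases hiI : i ∈ I
  · have h1 : (fun S => if i ∈ I ∧ S = (I.erase i)ᶜ then sgn n {i} Iᶜ * eps n I else 0)
        = (fun S => if S = (I.erase i)ᶜ then sgn n {i} Iᶜ * eps n I else 0) := by
      funext S; simp [hiI]
    have h2 : interL n (fun S => if S = (I.erase i)ᶜ then sgn n {i} Iᶜ * eps n I else 0)
        (fun S => if S = Jᶜ then eps n J else 0)
      = fun S => if Disjoint (I.erase i) J ∧ S = ((I.erase i) ∪ J)ᶜ then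
          (eps n (I.erase i) * (sgn n {i} Iᶜ * eps n I)) * (eps n J * eps n J)
            * sgn n (I.erase i) J * eps n ((I.erase i) ∪ J) else 0 :=
      interL_pt_pt n (I.erase i) J (sgn n {i} Iᶜ * eps n I) (eps n J)
    rw [h1, show alphaL n J = (fun S => if S = Jᶜ then eps n J else 0) from rfl, h2]
    funext S
    simp [hiI]
  · have h1 : (fun S => if i ∈ I ∧ S = (I.erase i)ᶜ then sgn n {i} Iᶜ * eps n I else 0)
        = (fun _ : Finset (Fin n) => (0:ℤ)) := by
      funext S; simp [hiI]
    rw [h1]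
    funext S
    simp [hiI, interL]

lemma term2_eq (n : ℕ) (i : Fin n) (I J : Finset (Fin n)) :
    interL n (alphaL n I) (wl (basL n {i}) (alphaL n J))
      = fun S => if i ∈ J ∧ Disjoint I (J.erase i) ∧ S = (I ∪ (J.erase i))ᶜ then
          (eps n I * eps n I) * (eps n (J.erase i) * (sgn n {i} Jᶜ * eps n J))
            * sgn n I (J.erase i) * eps n (I ∪ (J.erase i)) else 0 := by
  rw [wl_alpha]
  by_cases hiJ : i ∈ J
  · have h1 : (fun S => if i ∈ J ∧ S = (J.erase i)ᶜ then sgn n {i} Jᶜ * eps n J else 0)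
        = (fun S => if S = (J.erase i)ᶜ then sgn n {i} Jᶜ * eps n J else 0) := by
      funext S; simp [hiJ]
    have h2 : interL n (fun S => if S = Iᶜ then eps n I else 0)
        (fun S => if S = (J.erase i)ᶜ then sgn n {i} Jᶜ * eps n J else 0)
      = fun S => if Disjoint I (J.erase i) ∧ S = (I ∪ (J.erase i))ᶜ then
          (eps n I * eps n I) * (eps n (J.erase i) * (sgn n {i} Jᶜ * eps n J))
            * sgn n I (J.erase i) * eps n (I ∪ (J.erase i)) else 0 :=
      interL_pt_pt n I (J.erase i) (eps n I) (sgn n {i} Jᶜ * eps n J)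
    rw [h1, show alphaL n I = (fun S => if S = Iᶜ then eps n I else 0) from rfl, h2]
    funext S
    simp [hiJ]
  · have h1 : (fun S => if i ∈ J ∧ S = (J.erase i)ᶜ then sgn n {i} Jᶜ * eps n J else 0)
        = (fun _ : Finset (Fin n) => (0:ℤ)) := by
      funext S; simp [hiJ]
    rw [h1]
    funext S
    simp [hiJ, interL]

lemma lhs_eq (n : ℕ) (i : Fin n) (I J : Finset (Fin n)) :
    wl (basL n {i}) (interL n (alphaL n I) (alphaL n J))
      = fun S => if i ∈ I ∪ J ∧ Disjoint I J ∧ S = (I ∪ J)ᶜ ∪ {i} then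
          sgn n {i} (I ∪ J)ᶜ *
            ((eps n I * eps n I) * (eps n J * eps n J) * sgn n I J * eps n (I ∪ J)) else 0 := by
  have h0 : interL n (alphaL n I) (alphaL n J)
      = fun S => if Disjoint I J ∧ S = (I ∪ J)ᶜ then
          (eps n I * eps n I) * (eps n J * eps n J) * sgn n I J * eps n (I ∪ J) else 0 :=
    interL_pt_pt n I J (eps n I) (eps n J)
  rw [h0, wl_single]
  funext S
  by_cases hS : i ∈ S
  · simp only [hS, if_true]
    by_cases hC : Disjoint I J ∧ S \ {i} = (I ∪ J)ᶜ
    · obtain ⟨hD, hE⟩ := hC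
      have hiIJ : i ∈ I ∪ J := by
        have h3 : i ∉ S \ {i} := by simp
        rw [hE] at h3
        rwa [Finset.notMem_compl] at h3
      have hSeq : S = (I ∪ J)ᶜ ∪ {i} := by
        rw [← hE, Finset.sdiff_union_self_eq_union,
          Finset.union_eq_left.mpr (Finset.singleton_subset_iff.mpr hS)]
      rw [hE, if_pos ⟨hD, rfl⟩, if_pos ⟨hiIJ, hD, hSeq⟩]
    · have hne : ¬(i ∈ I ∪ J ∧ Disjoint I J ∧ S = (I ∪ J)ᶜ ∪ {i}) := by
        rintro ⟨hiIJ, hD, rfl⟩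
        apply hC
        refine ⟨hD, ?_⟩
        rw [Finset.union_sdiff_cancel_right
          (Finset.disjoint_singleton_right.mpr (Finset.notMem_compl.mpr hiIJ))]
      rw [if_neg hC, mul_zero, if_neg hne]
  · have hne : ¬(i ∈ I ∪ J ∧ Disjoint I J ∧ S = (I ∪ J)ᶜ ∪ {i}) := by
      rintro ⟨_, _, rfl⟩
      exact hS (by simp)
    rw [if_neg hS, if_neg hne]

theorem stmt16 (n : ℕ) (hn : 1 ≤ n) (I J : Finset (Fin n)) (i : Fin n) :
    wl (basL n {i}) (interL n (alphaL n I) (alphaL n J))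
      = interL n (wl (basL n {i}) (alphaL n I)) (alphaL n J)
        + ((-1 : ℤ) ^ I.card) • interL n (alphaL n I) (wl (basL n {i}) (alphaL n J)) := by
  rw [lhs_eq, term1_eq, term2_eq]
  funext S
  simp only [Pi.add_apply, Pi.smul_apply, smul_eq_mul]
  by_cases hiI : i ∈ I <;> by_cases hiJ : i ∈ J
  · -- i ∈ I, i ∈ J : both corrections fire and cancel
    have hD : ¬ Disjoint I J := fun h => Finset.disjoint_left.mp h hiI hiJ
    simp only [hiI, hiJ, hD, true_and, false_and, and_false, if_false]
    have hIu : I.erase i ∪ {i} = I := by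
      rw [Finset.union_comm, ← Finset.insert_eq, Finset.insert_erase hiI]
    have hJu : J.erase i ∪ {i} = J := by
      rw [Finset.union_comm, ← Finset.insert_eq, Finset.insert_erase hiJ]
    have hdI' : Disjoint (I.erase i) {i} := by simp
    have hdJ' : Disjoint (J.erase i) {i} := by simp
    have hE2 : I.erase i ∪ J = I ∪ J := by
      ext x
      simp only [Finset.mem_union, Finset.mem_erase]
      constructor
      · rintro (⟨_, hx⟩ | hx)
        · exact Or.inl hx
        · exact Or.inr hx
      · rintro (hx | hx)
        · rcases eq_or_ne x i with rfl | hne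
          · exact Or.inr hiJ
          · exact Or.inl ⟨hne, hx⟩
        · exact Or.inr hx
    have hE3 : I ∪ J.erase i = I ∪ J := by
      ext x
      simp only [Finset.mem_union, Finset.mem_erase]
      constructor
      · rintro (hx | ⟨_, hx⟩)
        · exact Or.inl hx
        · exact Or.inr hx
      · rintro (hx | hx)
        · exact Or.inl hx
        · rcases eq_or_ne x i with rfl | hne
          · exact Or.inl hiI
          · exact Or.inr ⟨hne, hx⟩
    have hDiff : Disjoint I (J.erase i) ↔ Disjoint (I.erase i) J := by
      rw [Finset.disjoint_left, Finset.disjoint_left]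
      constructor
      · intro h x hx hxJ
        rw [Finset.mem_erase] at hx
        exact h hx.2 (Finset.mem_erase.mpr ⟨hx.1, hxJ⟩)
      · intro h x hx hxJ
        rw [Finset.mem_erase] at hxJ
        exact h (Finset.mem_erase.mpr ⟨hxJ.1, hx⟩) hxJ.2
    rw [hE2, hE3]
    simp only [hDiff]
    split_ifs with h
    · obtain ⟨hd, -⟩ := h
      have hd' : ∀ x, x ∈ I → x ∈ J → x = i := by
        intro x hxI hxJ
        by_contra hne
        exact Finset.disjoint_left.mp hd (Finset.mem_erase.mpr ⟨hne, hxI⟩) hxJ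
      have e1 := eps_union n hdI'
      rw [hIu] at e1
      have e2 := eps_union n hdJ'
      rw [hJu] at e2
      have s1 := sgn_union_right n (I.erase i) hdJ'
      rw [hJu] at s1
      have s2 := sgn_union_left n (J.erase i) hdI'
      rw [hIu] at s2
      have s3 := sgn_swap n hdI'
      rw [Finset.card_singleton, mul_one] at s3
      have hIc : Iᶜ = J.erase i ∪ (I ∪ J)ᶜ := by
        ext x
        simp only [Finset.mem_compl, Finset.mem_union, Finset.mem_erase, not_or]
        constructor
        · intro hx
          by_cases hxJ : x ∈ J
          · exact Or.inl ⟨fun he => hx (he ▸ hiI), hxJ⟩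
          · exact Or.inr ⟨hx, hxJ⟩
        · rintro (⟨hne, hxJ⟩ | ⟨hx, _⟩)
          · exact fun hxI => hne (hd' x hxI hxJ)
          · exact hx
      have hJc : Jᶜ = I.erase i ∪ (I ∪ J)ᶜ := by
        ext x
        simp only [Finset.mem_compl, Finset.mem_union, Finset.mem_erase, not_or]
        constructor
        · intro hx
          by_cases hxI : x ∈ I
          · exact Or.inl ⟨fun he => hx (he ▸ hiJ), hxI⟩
          · exact Or.inr ⟨hxI, hx⟩
        · rintro (⟨hne, hxI⟩ | ⟨_, hx⟩)
          · exact fun hxJ => hne (hd' x hxI hxJ)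
          · exact hx
      have hdJR : Disjoint (J.erase i) (I ∪ J)ᶜ :=
        disjoint_compl_right.mono_left
          ((Finset.erase_subset _ _).trans Finset.subset_union_right)
      have hdIR : Disjoint (I.erase i) (I ∪ J)ᶜ :=
        disjoint_compl_right.mono_left
          ((Finset.erase_subset _ _).trans Finset.subset_union_left)
      have s4 : sgn n {i} Iᶜ = sgn n {i} (J.erase i) * sgn n {i} (I ∪ J)ᶜ := by
        rw [hIc]; exact sgn_union_right n {i} hdJR
      have s5 : sgn n {i} Jᶜ = sgn n {i} (I.erase i) * sgn n {i} (I ∪ J)ᶜ := by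
        rw [hJc]; exact sgn_union_right n {i} hdIR
      have hm : I.card = (I.erase i).card + 1 := (Finset.card_erase_add_one hiI).symm
      rw [e1, e2, s1, s2, s3, s4, s5, hm, pow_succ]
      ring
    · simp
  · -- i ∈ I, i ∉ J
    have hiIJ : i ∈ I ∪ J := Finset.mem_union_left _ hiI
    simp only [hiIJ, hiI, hiJ, true_and, false_and, if_false, mul_zero, add_zero]
    have hIu : I.erase i ∪ {i} = I := by
      rw [Finset.union_comm, ← Finset.insert_eq, Finset.insert_erase hiI]
    have hdI' : Disjoint (I.erase i) {i} := by simp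
    have hset1 : (I.erase i ∪ J)ᶜ = (I ∪ J)ᶜ ∪ {i} := by
      ext x
      rcases eq_or_ne x i with rfl | hne
      · simp [hiJ]
      · simp [Finset.mem_erase, hne]
    have hDiff1 : Disjoint (I.erase i) J ↔ Disjoint I J := by
      constructor
      · intro h
        rw [← hIu]
        exact Finset.disjoint_union_left.mpr ⟨h, by simpa using hiJ⟩
      · intro h
        exact h.mono_left (Finset.erase_subset _ _)
    rw [hset1]
    simp only [hDiff1]
    split_ifs with h
    · obtain ⟨hD, -⟩ := h
      have hIJu : (I.erase i ∪ J) ∪ {i} = I ∪ J := by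
        rw [Finset.union_right_comm, hIu]
      have hdIJ' : Disjoint (I.erase i ∪ J) {i} := by
        simp [Finset.disjoint_union_left, hiJ]
      have e1 := eps_union n hdI'
      rw [hIu] at e1
      have e2 := eps_union n hdIJ'
      rw [hIJu] at e2
      have s1 := sgn_union_left n J hdI'
      rw [hIu] at s1
      have hIc : Iᶜ = J ∪ (I ∪ J)ᶜ := by
        ext x
        simp only [Finset.mem_compl, Finset.mem_union, not_or]
        constructor
        · intro hx
          by_cases hxJ : x ∈ J
          · exact Or.inl hxJ
          · exact Or.inr ⟨hx, hxJ⟩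
        · rintro (hxJ | ⟨hx, _⟩)
          · exact Finset.disjoint_right.mp hD hxJ
          · exact hx
      have hdJR : Disjoint J (I ∪ J)ᶜ :=
        disjoint_compl_right.mono_left Finset.subset_union_right
      have s2 : sgn n {i} Iᶜ = sgn n {i} J * sgn n {i} (I ∪ J)ᶜ := by
        rw [hIc]; exact sgn_union_right n {i} hdJR
      rcases eps_pm n {i} with hc | hc <;> rw [e1, e2, s1, s2, hc] <;> ring
    · rfl
  · -- i ∉ I, i ∈ J
    have hiIJ : i ∈ I ∪ J := Finset.mem_union_right _ hiJ
    simp only [hiIJ, hiI, hiJ, true_and, false_and, if_false, mul_zero, zero_add]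
    have hJu : J.erase i ∪ {i} = J := by
      rw [Finset.union_comm, ← Finset.insert_eq, Finset.insert_erase hiJ]
    have hdJ' : Disjoint (J.erase i) {i} := by simp
    have hset2 : (I ∪ J.erase i)ᶜ = (I ∪ J)ᶜ ∪ {i} := by
      ext x
      rcases eq_or_ne x i with rfl | hne
      · simp [hiI]
      · simp [Finset.mem_erase, hne]
    have hDiff2 : Disjoint I (J.erase i) ↔ Disjoint I J := by
      constructor
      · intro h
        rw [← hJu]
        exact Finset.disjoint_union_right.mpr ⟨h, by simpa using hiI⟩
      · intro h
        exact h.mono_right (Finset.erase_subset _ _)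
    rw [hset2]
    simp only [hDiff2]
    split_ifs with h
    · obtain ⟨hD, -⟩ := h
      have hIJu : (I ∪ J.erase i) ∪ {i} = I ∪ J := by
        rw [Finset.union_assoc, hJu]
      have hdIJ' : Disjoint (I ∪ J.erase i) {i} := by
        simp [Finset.disjoint_union_left, hiI]
      have hdIi : Disjoint I {i} := by simp [hiI]
      have e1 := eps_union n hdJ'
      rw [hJu] at e1
      have e2 := eps_union n hdIJ'
      rw [hIJu] at e2
      have s1 := sgn_union_right n I hdJ'
      rw [hJu] at s1
      have s3 := sgn_swap n hdIi
      rw [Finset.card_singleton, mul_one] at s3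
      have hJc : Jᶜ = I ∪ (I ∪ J)ᶜ := by
        ext x
        simp only [Finset.mem_compl, Finset.mem_union, not_or]
        constructor
        · intro hx
          by_cases hxI : x ∈ I
          · exact Or.inl hxI
          · exact Or.inr ⟨hxI, hx⟩
        · rintro (hxI | ⟨_, hx⟩)
          · exact Finset.disjoint_left.mp hD hxI
          · exact hx
      have hdIR : Disjoint I (I ∪ J)ᶜ :=
        disjoint_compl_right.mono_left Finset.subset_union_left
      have s2 : sgn n {i} Jᶜ = sgn n {i} I * sgn n {i} (I ∪ J)ᶜ := by
        rw [hJc]; exact sgn_union_right n {i} hdIR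
      rcases eps_pm n {i} with hc | hc <;> rw [e1, e2, s1, s3, s2, hc] <;> ring
    · simp
  · -- i ∉ I, i ∉ J
    have hiIJ : i ∉ I ∪ J := by simp [hiI, hiJ]
    simp [hiIJ, hiI, hiJ]
end
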